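/- arXiv:1506.06732 — 2 statements merged into one kernel-verified Lean document; each statement's English description precedes it below -/
import Mathlib

section
/- Let L be a smooth manifold, X a vector field on L, and define {α, β} := L_X α ∧ β − α ∧ L_X β for differential forms α, β. Then (Λ*(L), d, {·,·}) is a differential graded Lie algebra: {·,·} is graded antisymmetric, satisfies the graded Jacobi identity, and d{α,β} = {dα,β} + (−1)^{deg α}{α,dβ}. -/
/-- On the algebra of differential forms, with `X` a vector field,
the bracket `{α, β} := L_X α ∧ β − α ∧ L_X β` makes `(Λ*(L), d, {·,·})` a DGLA:
graded antisymmetry, graded Jacobi, and `d{α,β} = {dα,β} + (−1)^{deg α}{α,dβ}`.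
The algebra of forms is abstracted as a graded-commutative graded algebra `Ω`
with a degree-1 graded derivation `d` with `d² = 0`, and the Lie derivative
`L_X` as a degree-0 derivation `ℒ` commuting with `d`. -/
theorem forms_with_lie_derivative_bracket_is_dgla
    {Ω : Type*} [Ring Ω] [Algebra ℝ Ω] (𝒜 : ℕ → Submodule ℝ Ω)
    (hcomm : ∀ k l, ∀ a ∈ 𝒜 k, ∀ b ∈ 𝒜 l, a * b = ((-1 : ℝ) ^ (k * l)) • (b * a))
    (d : Ω →ₗ[ℝ] Ω)
    (hddeg : ∀ k, ∀ a ∈ 𝒜 k, d a ∈ 𝒜 (k + 1))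
    (hdLeib : ∀ k, ∀ a ∈ 𝒜 k, ∀ b : Ω,
      d (a * b) = d a * b + ((-1 : ℝ) ^ k) • (a * d b))
    (hdd : ∀ a, d (d a) = 0)
    (ℒ : Ω →ₗ[ℝ] Ω)
    (hℒdeg : ∀ k, ∀ a ∈ 𝒜 k, ℒ a ∈ 𝒜 k)
    (hℒLeib : ∀ a b : Ω, ℒ (a * b) = ℒ a * b + a * ℒ b)
    (hℒd : ∀ a, d (ℒ a) = ℒ (d a)) :
    (∀ k l, ∀ a ∈ 𝒜 k, ∀ b ∈ 𝒜 l,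
      ℒ a * b - a * ℒ b = -(((-1 : ℝ) ^ (k * l)) • (ℒ b * a - b * ℒ a))) ∧
    (∀ k l, ∀ a ∈ 𝒜 k, ∀ b ∈ 𝒜 l, ∀ c : Ω,
      ℒ a * (ℒ b * c - b * ℒ c) - a * ℒ (ℒ b * c - b * ℒ c) =
        (ℒ (ℒ a * b - a * ℒ b) * c - (ℒ a * b - a * ℒ b) * ℒ c)
          + ((-1 : ℝ) ^ (k * l)) •
            (ℒ b * (ℒ a * c - a * ℒ c) - b * ℒ (ℒ a * c - a * ℒ c))) ∧
    (∀ k, ∀ a ∈ 𝒜 k, ∀ b : Ω,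
      d (ℒ a * b - a * ℒ b) =
        (ℒ (d a) * b - d a * ℒ b)
          + ((-1 : ℝ) ^ k) • (ℒ a * d b - a * ℒ (d b))) := by
  refine ⟨?_, ?_, ?_⟩
  · intro k l a ha b hb
    rw [hcomm k l (ℒ a) (hℒdeg k a ha) b hb, hcomm k l a ha (ℒ b) (hℒdeg l b hb)]
    module
  · intro k l a ha b hb c
    have e1 : ℒ a * ℒ b = ((-1:ℝ)^(k*l)) • (ℒ b * ℒ a) :=
      hcomm k l (ℒ a) (hℒdeg k a ha) (ℒ b) (hℒdeg l b hb)
    have e2 : a * ℒ b = ((-1:ℝ)^(k*l)) • (ℒ b * a) :=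
      hcomm k l a ha (ℒ b) (hℒdeg l b hb)
    have e3 : ℒ (ℒ a) * b = ((-1:ℝ)^(k*l)) • (b * ℒ (ℒ a)) :=
      hcomm k l (ℒ (ℒ a)) (hℒdeg k _ (hℒdeg k a ha)) b hb
    have e4 : a * b = ((-1:ℝ)^(k*l)) • (b * a) := hcomm k l a ha b hb
    simp only [map_sub, hℒLeib, mul_sub, sub_mul, add_mul, mul_add, smul_sub, smul_add,
      smul_mul_assoc, mul_smul_comm, ← mul_assoc]
    rw [e1, e2, e3, e4]
    simp only [smul_mul_assoc]
    module
  · intro k a ha b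
    rw [map_sub, hdLeib k (ℒ a) (hℒdeg k a ha) b, hdLeib k a ha (ℒ b), hℒd, hℒd]
    module
end

section
/- Let γ, α be 1-forms and X, Y vector fields on a smooth manifold L with γ(X) = 1, α(X) + γ(Y) = 0, and dγ = γ ∧ ι_X dγ. Then the Frölicher-Nijenhuis identity [γ⊗X, α⊗X + γ⊗Y]_{FN} = −(δα + L_Y γ ∧ γ) ⊗ X − (α(X)+γ(Y)) dγ ⊗ X holds, where δα = dα + L_X γ ∧ α − γ ∧ L_X α; consequently if [γ⊗X, α⊗X + γ⊗Y]_{FN} = 0 then δα + L_Y γ ∧ γ = 0. -/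
namespace Stmt17

variable {A : Type*} [CommRing A] [Algebra ℝ A]

/-- Exterior derivative of a 1-form, evaluated on vector fields (derivations). -/
def dOne (γ : Derivation ℝ A A →ₗ[A] A) (V W : Derivation ℝ A A) : A :=
  V (γ W) - W (γ V) - γ ⁅V, W⁆

/-- Lie derivative `L_X γ` of a 1-form, evaluated on a vector field. -/
def lieD (X : Derivation ℝ A A) (γ : Derivation ℝ A A →ₗ[A] A)
    (V : Derivation ℝ A A) : A :=
  X (γ V) - γ ⁅X, V⁆

/-- The Frölicher-Nijenhuis bracket of two endomorphism fields, evaluated on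
vector fields. -/
def fnForm (Φ Ψ : Derivation ℝ A A → Derivation ℝ A A)
    (V W : Derivation ℝ A A) : Derivation ℝ A A :=
  ⁅Φ V, Ψ W⁆ + ⁅Ψ V, Φ W⁆ + Φ (Ψ ⁅V, W⁆) + Ψ (Φ ⁅V, W⁆)
    - Φ ⁅Ψ V, W⁆ - Φ ⁅V, Ψ W⁆ - Ψ ⁅Φ V, W⁆ - Ψ ⁅V, Φ W⁆

/-- `δα = dα + L_X γ ∧ α − γ ∧ L_X α`, evaluated on vector fields. -/
def deltaForm (γ α : Derivation ℝ A A →ₗ[A] A) (X : Derivation ℝ A A)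
    (V W : Derivation ℝ A A) : A :=
  dOne α V W + (lieD X γ V * α W - lieD X γ W * α V)
    - (γ V * lieD X α W - γ W * lieD X α V)

lemma smul_lie' (a : A) (X W : Derivation ℝ A A) : ⁅a • X, W⁆ = a • ⁅X, W⁆ - W a • X := by
  ext b
  simp only [Derivation.commutator_apply, Derivation.smul_apply, Derivation.sub_apply,
    map_smul, Derivation.leibniz, smul_eq_mul]
  ring

lemma lie_smul' (a : A) (V X : Derivation ℝ A A) : ⁅V, a • X⁆ = a • ⁅V, X⁆ + V a • X := by
  ext b
  simp only [Derivation.commutator_apply, Derivation.smul_apply, Derivation.add_apply,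
    map_smul, Derivation.leibniz, smul_eq_mul]
  ring

/-- With `γ(X) = 1`, `α(X) + γ(Y) = 0` and `dγ = γ ∧ ι_X dγ`, the
Frölicher-Nijenhuis identity
`[γ⊗X, α⊗X + γ⊗Y]_FN = −(δα + L_Y γ ∧ γ) ⊗ X − (α(X)+γ(Y)) dγ ⊗ X` holds;
consequently `[γ⊗X, α⊗X + γ⊗Y]_FN = 0` implies `δα + L_Y γ ∧ γ = 0`.
Vector fields are modelled as derivations of the function algebra `A`. -/
theorem fn_identity_for_deformation
    (γ α : Derivation ℝ A A →ₗ[A] A) (X Y : Derivation ℝ A A)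
    (hX : γ X = 1) (h0 : α X + γ Y = 0)
    (hFrob : ∀ V W, dOne γ V W = γ V * dOne γ X W - γ W * dOne γ X V) :
    (∀ V W, fnForm (fun V => γ V • X) (fun V => α V • X + γ V • Y) V W =
        -((deltaForm γ α X V W + (lieD Y γ V * γ W - lieD Y γ W * γ V)) • X)
          - ((α X + γ Y) * dOne γ V W) • X) ∧
    ((∀ V W, fnForm (fun V => γ V • X) (fun V => α V • X + γ V • Y) V W = 0) →
      ∀ V W, deltaForm γ α X V W + (lieD Y γ V * γ W - lieD Y γ W * γ V) = 0) := by
  have hAX : α X = -γ Y := eq_neg_of_add_eq_zero_left h0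
  have key : ∀ V W, fnForm (fun V => γ V • X) (fun V => α V • X + γ V • Y) V W =
        -((deltaForm γ α X V W + (lieD Y γ V * γ W - lieD Y γ W * γ V)) • X)
          - ((α X + γ Y) * dOne γ V W) • X := by
    intro V W
    have hF := hFrob V W
    simp only [dOne, hX, Derivation.map_one_eq_zero, sub_zero] at hF
    have hVX : ⁅V, X⁆ = -⁅X, V⁆ := by rw [← lie_skew]
    have hVY : ⁅V, Y⁆ = -⁅Y, V⁆ := by rw [← lie_skew]
    have hYX : ⁅Y, X⁆ = -⁅X, Y⁆ := by rw [← lie_skew]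
    simp only [fnForm, deltaForm, dOne, lieD, lie_add, add_lie, smul_lie', lie_smul',
      lie_self, smul_zero, map_add, map_smul, map_sub, map_neg, smul_eq_mul,
      Derivation.smul_apply, Derivation.add_apply,
      hVX, hVY, hYX, hX, hAX, Derivation.map_one_eq_zero]
    match_scalars
    all_goals try ring
    all_goals linear_combination -hF
  refine ⟨key, fun hz V W => ?_⟩
  have h := key V W
  rw [hz V W, h0, zero_mul, zero_smul, sub_zero, eq_comm, neg_eq_zero] at h
  have := congrArg γ h
  simpa [hX] using this

end Stmt17
end
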